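/- Suppose C ⊆ F_q^{9×m} with m ≥ 9 is an F_q-linear rank-metric code representing the non-Pappus q-matroid. Then the number of codewords of rank 6 in C equals 8(q^m - 1), and the number of codewords of rank 7 equals (q^m - 1)·(gaussbinom(9,2,q) - 8·gaussbinom(3,1,q)). -/

import Mathlib

open Matrix

variable {F : Type*} [Field F]

/-- Column space of a matrix: the span of its columns. -/
def colSpace {n m : ℕ} (M : Matrix (Fin n) (Fin m) F) : Submodule F (Fin n → F) :=
  Submodule.span F (Set.range Mᵀ)

lemma colSpace_le_iff {n m : ℕ} (M : Matrix (Fin n) (Fin m) F) (U : Submodule F (Fin n → F)) :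
    colSpace M ≤ U ↔ ∀ j, Mᵀ j ∈ U := by
  rw [colSpace, Submodule.span_le]
  exact ⟨fun h j => h ⟨j, rfl⟩, fun h _ ⟨j, hj⟩ => hj ▸ h j⟩

/-- `C(U)`: the codewords of `C` whose column space is contained in `U`. -/
def codeCU {n m : ℕ} (C : Submodule F (Matrix (Fin n) (Fin m) F))
    (U : Submodule F (Fin n → F)) : Submodule F (Matrix (Fin n) (Fin m) F) where
  carrier := {M | M ∈ C ∧ colSpace M ≤ U}
  add_mem' := by
    rintro a b ⟨haC, ha⟩ ⟨hbC, hb⟩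
    refine ⟨C.add_mem haC hbC, (colSpace_le_iff _ _).2 fun j => ?_⟩
    have h := U.add_mem ((colSpace_le_iff a U).1 ha j) ((colSpace_le_iff b U).1 hb j)
    rw [Matrix.transpose_add]
    first | exact h | (convert h using 1; ext i; simp)
  zero_mem' := by
    exact ⟨C.zero_mem, (colSpace_le_iff _ _).2 fun j => U.zero_mem⟩
  smul_mem' := by
    rintro c a ⟨haC, ha⟩
    refine ⟨C.smul_mem c haC, (colSpace_le_iff _ _).2 fun j => ?_⟩
    have h := U.smul_mem c ((colSpace_le_iff a U).1 ha j)
    rw [Matrix.transpose_smul]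
    first | exact h | (convert h using 1; ext i; simp)

/-- Orthogonal complement with respect to the standard (dot-product) bilinear form. -/
def perp {n : ℕ} (U : Submodule F (Fin n → F)) : Submodule F (Fin n → F) where
  carrier := {v | ∀ u ∈ U, v ⬝ᵥ u = 0}
  add_mem' := by
    intro a b ha hb u hu
    rw [add_dotProduct, ha u hu, hb u hu, add_zero]
  zero_mem' := by
    intro u hu
    rw [zero_dotProduct]
  smul_mem' := by
    intro c a ha u hu
    rw [smul_dotProduct, ha u hu, smul_zero]

/-- The minimum rank distance of a matrix code. -/
noncomputable def minRankDist {n m : ℕ} (C : Submodule F (Matrix (Fin n) (Fin m) F)) : ℕ :=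
  sInf {r : ℕ | ∃ M ∈ C, M ≠ 0 ∧ M.rank = r}

/-- The rank function of the q-polymatroid associated to a matrix rank-metric code. -/
noncomputable def rhoCode {n m : ℕ} (C : Submodule F (Matrix (Fin n) (Fin m) F))
    (U : Submodule F (Fin n → F)) : ℚ :=
  ((Module.finrank F C : ℚ) - (Module.finrank F (codeCU C (perp U)) : ℚ)) / (m : ℚ)

/-- The coordinate 3-space spanned by `e_a, e_b, e_c` in `F_q^9`. -/
def tri (a b c : Fin 9) : Submodule F (Fin 9 → F) :=
  Submodule.span F {Pi.single a 1, Pi.single b 1, Pi.single c 1}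

/-- The eight special 3-spaces of the non-Pappus q-matroid. -/
def NPset : Set (Submodule F (Fin 9 → F)) :=
  {tri 0 1 2, tri 0 5 7, tri 0 4 6, tri 1 3 6, tri 1 5 8, tri 2 3 7, tri 2 4 8, tri 3 4 5}

open scoped Classical in
/-- The rank function of the non-Pappus q-matroid. -/
noncomputable def rhoNP (U : Submodule F (Fin 9 → F)) : ℚ :=
  if U ∈ (NPset : Set (Submodule F (Fin 9 → F))) then 2
  else if Module.finrank F U ≤ 3 then (Module.finrank F U : ℚ) else 3

/-- Gaussian binomial coefficient, via the q-Pascal recursion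
`[n+1, k+1]_q = [n, k]_q + q^(k+1) [n, k+1]_q`. -/
def gaussBinom : ℕ → ℕ → ℕ → ℕ
  | _, 0, _ => 1
  | 0, _ + 1, _ => 0
  | n + 1, k + 1, q => gaussBinom n k q + q ^ (k + 1) * gaussBinom n (k + 1) q

/-!
Write `C(W)` for the codewords whose column space lies in `W`. The representation identity reads
`dim C(U^⊥) = m (3 - ρ(U))`: it vanishes when `ρ(U) = 3` and equals `m` for the eight circuits and
for every 2-space. Applied to `U = (col M)^⊥`, this forces every nonzero codeword to have rank
at least 6, with equality only when `(col M)^⊥` is a circuit.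

Group the codewords of rank `r` by `U = (col M)^⊥`, a `(9 - r)`-space; the codewords in the group of
`U` are the nonzero words of `C(U^⊥)` of full rank `r`. For `r = 6` a group is all of
`C(X^⊥) \ 0` if `U = X` is a circuit and empty otherwise. For `r = 7` it is all of `C(U^⊥) \ 0` if
`U` lies in no circuit. If `U ≤ X` for a circuit `X`, then `C(U^⊥) = C(X^⊥)` (both have dimension
`m`), so every word has rank at most 6 and the group is empty. Circuits meet in dimension at most 1,
so `8 [3,2]_q` of the `[9,2]_q` 2-spaces lie in a circuit. The Gaussian binomials count subspaces
because every subspace of dimension `k` is spanned by `∏_{i<k} (q^k - q^i)` independent `k`-tuples.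
-/

open Module Submodule

section Perp

variable {n : ℕ}

lemma perp_eq_orthogonal (U : Submodule F (Fin n → F)) :
    perp U = LinearMap.BilinForm.orthogonal (dotProductBilin F F) U := by
  ext v
  simp only [LinearMap.BilinForm.mem_orthogonal_iff, dotProductBilin_apply_apply,
    dotProduct_comm _ v]
  rfl

lemma dotProductBilin_nondegenerate :
    LinearMap.BilinForm.Nondegenerate
      (dotProductBilin F F : LinearMap.BilinForm F (Fin n → F)) := by
  refine ⟨fun v hv => funext fun i => ?_, fun v hv => funext fun i => ?_⟩
  · simpa using hv (Pi.single i 1)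
  · simpa using hv (Pi.single i 1)

lemma dotProductBilin_isRefl :
    LinearMap.BilinForm.IsRefl (dotProductBilin F F : LinearMap.BilinForm F (Fin n → F)) :=
  fun v u h => by simpa [dotProduct_comm] using h

lemma finrank_perp (U : Submodule F (Fin n → F)) : finrank F (perp U) = n - finrank F U := by
  rw [perp_eq_orthogonal, LinearMap.BilinForm.finrank_orthogonal dotProductBilin_nondegenerate,
    finrank_fin_fun]

lemma perp_perp (U : Submodule F (Fin n → F)) : perp (perp U) = U := by
  rw [perp_eq_orthogonal, perp_eq_orthogonal,
    LinearMap.BilinForm.orthogonal_orthogonal dotProductBilin_nondegenerate dotProductBilin_isRefl]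

lemma perp_le_perp {U V : Submodule F (Fin n → F)} (h : U ≤ V) : perp V ≤ perp U :=
  fun _ hv u hu => hv u (h hu)

lemma le_perp_comm {U V : Submodule F (Fin n → F)} (h : U ≤ perp V) : V ≤ perp U :=
  fun v hv u hu => by rw [dotProduct_comm]; exact h hu v hv

lemma perp_top : perp (⊤ : Submodule F (Fin n → F)) = ⊥ := by
  rw [← Submodule.finrank_eq_zero, finrank_perp, finrank_top, finrank_fin_fun, Nat.sub_self]

end Perp

section NonPappus

lemma finrank_spanSubset_finset {n : ℕ} (s : Finset (Fin n)) :
    finrank F (Pi.spanSubset F (s : Set (Fin n))) = s.card := by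
  rw [Pi.dim_spanSubset, Set.ncard_coe_finset]

lemma spanSubset_union {ι : Type*} [Finite ι] (s t : Set ι) :
    Pi.spanSubset F (s ∪ t) = Pi.spanSubset F s ⊔ Pi.spanSubset F t := by
  rw [Pi.spanSubset, Set.image_union, span_union, Pi.spanSubset, Pi.spanSubset]

lemma tri_eq_spanSubset (a b c : Fin 9) :
    tri (F := F) a b c = Pi.spanSubset F (({a, b, c} : Finset (Fin 9)) : Set (Fin 9)) := by
  simp [tri, Pi.spanSubset, Set.image_insert_eq]

def npLines : Fin 8 → Finset (Fin 9) :=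
  ![{0, 1, 2}, {0, 5, 7}, {0, 4, 6}, {1, 3, 6}, {1, 5, 8}, {2, 3, 7}, {2, 4, 8}, {3, 4, 5}]

lemma NPset_eq_range :
    (NPset : Set (Submodule F (Fin 9 → F))) =
      Set.range fun i => Pi.spanSubset F (npLines i : Set (Fin 9)) := by
  ext X
  simp only [NPset, tri_eq_spanSubset, Set.mem_insert_iff, Set.mem_singleton_iff, Set.mem_range,
    Fin.exists_fin_succ, npLines]
  simp [eq_comm]

set_option maxRecDepth 10000 in
lemma card_npLines (i : Fin 8) : (npLines i).card = 3 := by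
  revert i; decide

set_option maxRecDepth 10000 in
lemma card_npLines_union {i j : Fin 8} (h : i ≠ j) : 5 ≤ (npLines i ∪ npLines j).card := by
  revert i j; decide

lemma finrank_sup_spanSubset_npLines {i j : Fin 8} (h : i ≠ j) :
    5 ≤ finrank F ↥(Pi.spanSubset F (npLines i : Set (Fin 9)) ⊔
      Pi.spanSubset F (npLines j : Set (Fin 9))) := by
  rw [← spanSubset_union, ← Finset.coe_union, finrank_spanSubset_finset]
  exact card_npLines_union h

lemma spanSubset_npLines_injective :
    Function.Injective fun i => Pi.spanSubset F (npLines i : Set (Fin 9)) := by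
  intro i j (hij : Pi.spanSubset F _ = Pi.spanSubset F _)
  by_contra h
  have h5 := finrank_sup_spanSubset_npLines (F := F) h
  rw [hij, sup_idem, finrank_spanSubset_finset, card_npLines] at h5
  omega

lemma ncard_NPset : (NPset : Set (Submodule F (Fin 9 → F))).ncard = 8 := by
  rw [NPset_eq_range, Set.ncard_range_of_injective spanSubset_npLines_injective, Nat.card_fin]

lemma finrank_of_mem_NPset {X : Submodule F (Fin 9 → F)} (hX : X ∈ NPset) :
    finrank F X = 3 := by
  rw [NPset_eq_range] at hX
  obtain ⟨i, rfl⟩ := hX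
  rw [finrank_spanSubset_finset, card_npLines]

lemma finrank_inf_le_one_of_mem_NPset {X Y : Submodule F (Fin 9 → F)} (hX : X ∈ NPset)
    (hY : Y ∈ NPset) (hXY : X ≠ Y) : finrank F ↥(X ⊓ Y) ≤ 1 := by
  have hsum := Submodule.finrank_sup_add_finrank_inf_eq X Y
  rw [finrank_of_mem_NPset hX, finrank_of_mem_NPset hY] at hsum
  rw [NPset_eq_range] at hX hY
  obtain ⟨i, rfl⟩ := hX
  obtain ⟨j, rfl⟩ := hY
  simp only at hXY hsum ⊢
  have h5 := finrank_sup_spanSubset_npLines (F := F) (i := i) (j := j)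
    (by rintro rfl; exact hXY rfl)
  omega

end NonPappus

section RhoNP

variable {U : Submodule F (Fin 9 → F)}

lemma rhoNP_of_mem (hU : U ∈ NPset) : rhoNP U = 2 := by
  rw [rhoNP, if_pos hU]

lemma rhoNP_of_finrank_eq_two (hU : finrank F U = 2) : rhoNP U = 2 := by
  have hS : U ∉ NPset := fun h => by have := finrank_of_mem_NPset h; omega
  rw [rhoNP, if_neg hS, if_pos (by omega), hU]
  norm_num

lemma rhoNP_of_three_le (hU : 3 ≤ finrank F U) (hS : U ∉ NPset) : rhoNP U = 3 := by
  rw [rhoNP, if_neg hS]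
  split_ifs with h
  · rw [show finrank F U = 3 by omega]
    norm_num
  · rfl

lemma rhoNP_top : rhoNP (⊤ : Submodule F (Fin 9 → F)) = 3 := by
  have h9 : finrank F (⊤ : Submodule F (Fin 9 → F)) = 9 := by
    rw [finrank_top, finrank_fin_fun]
  exact rhoNP_of_three_le (by omega) fun h => by have := finrank_of_mem_NPset h; omega

end RhoNP

section CodeCU

variable {n m : ℕ} {C : Submodule F (Matrix (Fin n) (Fin m) F)}

lemma codeCU_mono {U V : Submodule F (Fin n → F)} (h : U ≤ V) : codeCU C U ≤ codeCU C V :=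
  fun _ hM => ⟨hM.1, hM.2.trans h⟩

lemma codeCU_bot : codeCU C ⊥ = ⊥ := by
  refine eq_bot_iff.2 fun M ⟨_, hM⟩ => (Submodule.mem_bot F).2 ?_
  have hcols : ∀ j, Mᵀ j = 0 := fun j =>
    (Submodule.mem_bot F).1 ((colSpace_le_iff M ⊥).1 hM j)
  ext i j
  exact congrFun (hcols j) i

lemma rank_eq_finrank_colSpace (M : Matrix (Fin n) (Fin m) F) :
    M.rank = finrank F (colSpace M) :=
  M.rank_eq_finrank_span_cols

lemma rank_le_finrank_of_mem_codeCU {W : Submodule F (Fin n → F)} {M : Matrix (Fin n) (Fin m) F}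
    (hM : M ∈ codeCU C W) : M.rank ≤ finrank F W :=
  (rank_eq_finrank_colSpace M).trans_le (Submodule.finrank_mono hM.2)

lemma mem_codeCU_perp_perp_colSpace {M : Matrix (Fin n) (Fin m) F} (hM : M ∈ C) :
    M ∈ codeCU C (perp (perp (colSpace M))) :=
  ⟨hM, (perp_perp _).ge⟩

lemma rhoCode_top : rhoCode C ⊤ = finrank F C / m := by
  rw [rhoCode, perp_top, codeCU_bot, finrank_bot, Nat.cast_zero, sub_zero]

lemma ne_zero_of_rhoCode_ne_zero {U : Submodule F (Fin n → F)} (h : rhoCode C U ≠ 0) :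
    m ≠ 0 := by
  rintro rfl
  simp [rhoCode] at h

lemma finrank_codeCU_perp (hm : m ≠ 0) (U : Submodule F (Fin n → F)) :
    (finrank F (codeCU C (perp U)) : ℚ) = finrank F C - m * rhoCode C U := by
  rw [rhoCode]
  field_simp
  ring

end CodeCU

section Fibers
open Finset

variable {n m : ℕ} {C : Submodule F (Matrix (Fin n) (Fin m) F)} {W : Submodule F (Fin n → F)}

lemma natCard_colSpace_eq_of_rank_lt (h : ∀ M ∈ codeCU C W, M.rank < finrank F W) :
    Nat.card {M // M ∈ C ∧ colSpace M = W} = 0 := by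
  rw [Nat.card_eq_zero]
  refine .inl ⟨fun ⟨M, hM, hW⟩ => ?_⟩
  have := h M ⟨hM, hW.le⟩
  rw [rank_eq_finrank_colSpace, hW] at this
  exact lt_irrefl _ this

variable [Fintype F]

lemma natCard_mem_ne_zero {V : Type*} [AddCommGroup V] [Module F V] [Finite V]
    (U : Submodule F V) :
    Nat.card {v // v ∈ U ∧ v ≠ 0} = Fintype.card F ^ finrank F U - 1 := by
  change Nat.card ↥((U : Set V) \ {0}) = _
  rw [Nat.card_coe_set_eq, Set.ncard_sdiff_singleton_of_mem U.zero_mem, ← Nat.card_coe_set_eq,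
    SetLike.coe_sort_coe, Module.natCard_eq_pow_finrank (K := F), Nat.card_eq_fintype_card]

lemma natCard_colSpace_eq_of_finrank_le_rank (hW : 0 < finrank F W)
    (h : ∀ M ∈ codeCU C W, M ≠ 0 → finrank F W ≤ M.rank) :
    Nat.card {M // M ∈ C ∧ colSpace M = W} = Fintype.card F ^ finrank F (codeCU C W) - 1 := by
  rw [← natCard_mem_ne_zero]
  refine Nat.card_congr (Equiv.subtypeEquivRight fun M => ⟨?_, ?_⟩)
  · rintro ⟨hM, rfl⟩
    refine ⟨⟨hM, le_rfl⟩, ?_⟩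
    rintro rfl
    rw [← rank_eq_finrank_colSpace, Matrix.rank_zero] at hW
    exact lt_irrefl 0 hW
  · rintro ⟨hM, h0⟩
    refine ⟨hM.1, Submodule.eq_of_le_of_finrank_le hM.2 ?_⟩
    rw [← rank_eq_finrank_colSpace]
    exact h M hM h0

lemma natCard_rank_eq_sum {r : ℕ} (hr : r ≤ n) :
    Nat.card {M // M ∈ C ∧ M.rank = r} =
      ∑ U ∈ univ.filter (fun U : Submodule F (Fin n → F) => finrank F U = n - r),
        Nat.card {M // M ∈ C ∧ colSpace M = perp U} := by
  classical
  rw [Nat.card_eq_fintype_card, Fintype.card_subtype,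
    card_eq_sum_card_fiberwise (f := fun M => perp (colSpace M))
      (t := univ.filter fun U : Submodule F (Fin n → F) => finrank F U = n - r) fun M hM => by
        simp only [coe_filter, mem_univ, true_and, Set.mem_ofPred_eq] at hM ⊢
        rw [finrank_perp, ← rank_eq_finrank_colSpace, hM.2]]
  refine sum_congr rfl fun U hU => ?_
  rw [Nat.card_eq_fintype_card, Fintype.card_subtype, filter_filter]
  refine congrArg card (filter_congr fun M _ => ?_)
  rw [mem_filter] at hU
  constructor
  · rintro ⟨⟨hM, -⟩, rfl⟩
    exact ⟨hM, (perp_perp _).symm⟩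
  · rintro ⟨hM, hW⟩
    refine ⟨⟨hM, ?_⟩, by rw [hW, perp_perp]⟩
    rw [rank_eq_finrank_colSpace, hW, finrank_perp, hU.2]
    omega

lemma natCard_rank_eq_card_mul {r c : ℕ} (hr : r ≤ n) (P : Submodule F (Fin n → F) → Prop)
    [DecidablePred P] (hP : ∀ U : Submodule F (Fin n → F), finrank F U = n - r →
      Nat.card {M // M ∈ C ∧ colSpace M = perp U} = if P U then c else 0) :
    Nat.card {M // M ∈ C ∧ M.rank = r} =
      Nat.card {U : Submodule F (Fin n → F) // finrank F U = n - r ∧ P U} * c := by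
  rw [natCard_rank_eq_sum hr, sum_congr rfl fun U hU => hP U (mem_filter.1 hU).2, sum_ite,
    sum_const_zero, add_zero, sum_const, smul_eq_mul, filter_filter, Nat.card_eq_fintype_card,
    Fintype.card_subtype]

end Fibers

section GaussBinom
open Finset

lemma prod_pow_sub_pow_succ (q n k : ℕ) :
    ∏ i : Fin (k + 1), ((q : ℤ) ^ (n + 1) - q ^ (i : ℕ)) =
      (q ^ (n + 1) - 1) * q ^ k * ∏ i : Fin k, ((q : ℤ) ^ n - q ^ (i : ℕ)) := by
  have hsucc : ∏ i : Fin k, ((q : ℤ) ^ (n + 1) - q ^ (i.succ : ℕ)) =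
      ∏ i : Fin k, ((q : ℤ) * (q ^ n - q ^ (i : ℕ))) :=
    prod_congr rfl fun i _ => by rw [Fin.val_succ]; ring
  rw [Fin.prod_univ_succ, hsucc, prod_mul_distrib, prod_const, card_univ,
    Fintype.card_fin, Fin.val_zero, pow_zero, mul_assoc]

lemma gaussBinom_mul_prod (q n k : ℕ) :
    (gaussBinom n k q : ℤ) * ∏ i : Fin k, ((q : ℤ) ^ k - q ^ (i : ℕ)) =
      ∏ i : Fin k, ((q : ℤ) ^ n - q ^ (i : ℕ)) := by
  induction n generalizing k with
  | zero =>
    cases k with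
    | zero => simp [gaussBinom]
    | succ k => simp [gaussBinom, Fin.prod_univ_succ]
  | succ n ih =>
    cases k with
    | zero => simp [gaussBinom]
    | succ k =>
      have h1 := ih k
      have h2 := ih (k + 1)
      rw [prod_pow_sub_pow_succ, Fin.prod_univ_castSucc] at h2
      rw [gaussBinom, prod_pow_sub_pow_succ, prod_pow_sub_pow_succ]
      push_cast
      simp only [Fin.val_castSucc, Fin.val_last] at h2
      linear_combination ((q : ℤ) ^ (k + 1) - 1) * q ^ k * h1 + (q : ℤ) ^ (k + 1) * h2

lemma gaussBinom_three_two (q : ℕ) : gaussBinom 3 2 q = gaussBinom 3 1 q := by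
  simp [gaussBinom]
  ring

lemma cast_prod_pow_sub_pow {q n k : ℕ} (hq : 1 ≤ q) (hk : k ≤ n) :
    ((∏ i : Fin k, (q ^ n - q ^ (i : ℕ)) : ℕ) : ℤ) =
      ∏ i : Fin k, ((q : ℤ) ^ n - q ^ (i : ℕ)) := by
  push_cast [Nat.cast_prod]
  exact prod_congr rfl fun i _ => by
    rw [Nat.cast_sub (Nat.pow_le_pow_right hq (i.2.le.trans hk))]
    push_cast
    rfl

end GaussBinom

section SubspaceCount
open Finset

variable {V : Type*} [AddCommGroup V] [Module F V] [Fintype V]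

lemma natCard_le_finrank_exists_le {k c : ℕ} {𝒳 : Set (Submodule F V)}
    (h𝒳 : 𝒳.Pairwise fun X Y => finrank F ↥(X ⊓ Y) < k)
    (hc : ∀ X ∈ 𝒳, Nat.card {U : Submodule F V // U ≤ X ∧ finrank F U = k} = c) :
    Nat.card {U : Submodule F V // (∃ X ∈ 𝒳, U ≤ X) ∧ finrank F U = k} = 𝒳.ncard * c := by
  classical
  have hunion : (univ.filter fun U : Submodule F V => (∃ X ∈ 𝒳, U ≤ X) ∧ finrank F U = k) =
      𝒳.toFinset.biUnion fun X => univ.filter fun U => U ≤ X ∧ finrank F U = k := by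
    ext U
    simp only [mem_filter, mem_univ, true_and, mem_biUnion, Set.mem_toFinset]
    constructor
    · rintro ⟨⟨X, hX, hUX⟩, hU⟩
      exact ⟨X, hX, hUX, hU⟩
    · rintro ⟨X, hX, hUX, hU⟩
      exact ⟨⟨X, hX, hUX⟩, hU⟩
  have hdisj : (𝒳.toFinset : Set (Submodule F V)).PairwiseDisjoint
      fun X => univ.filter fun U => U ≤ X ∧ finrank F U = k := by
    refine fun X hX Y hY hXY => disjoint_left.2 fun U hUX hUY => ?_
    rw [mem_filter] at hUX hUY
    have := Submodule.finrank_mono (le_inf hUX.2.1 hUY.2.1)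
    have := h𝒳 (Set.mem_toFinset.1 hX) (Set.mem_toFinset.1 hY) hXY
    omega
  rw [Nat.card_eq_fintype_card, Fintype.card_subtype, hunion, card_biUnion hdisj,
    sum_congr rfl fun X hX => ?_, sum_const, smul_eq_mul, Set.ncard_eq_toFinset_card']
  rw [← hc X (Set.mem_toFinset.1 hX), Nat.card_eq_fintype_card, Fintype.card_subtype]

variable [Fintype F]

lemma natCard_linearIndependent_span_eq {k : ℕ} {U : Submodule F V} (hU : finrank F U = k) :
    Nat.card {s : Fin k → V // LinearIndependent F s ∧ span F (Set.range s) = U} =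
      ∏ i : Fin k, (Fintype.card F ^ k - Fintype.card F ^ (i : ℕ)) := by
  subst hU
  rw [← card_linearIndependent le_rfl]
  symm
  refine Nat.card_congr ((Equiv.subtypeEquiv (q := fun s => LinearIndependent F s.1)
    Equiv.subtypePiEquivPi.symm fun t => ?_).trans
    ((Equiv.subtypeSubtypeEquivSubtypeInter (fun s : Fin (finrank F U) → V => ∀ i, s i ∈ U)
      (fun s => LinearIndependent F s)).trans (Equiv.subtypeEquivRight fun s => ?_)))
  · exact (LinearMap.linearIndependent_iff U.subtype U.ker_subtype).symm
  · constructor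
    · rintro ⟨hU, hs⟩
      refine ⟨hs, Submodule.eq_of_le_of_finrank_eq (span_le.2 ?_) ?_⟩
      · rintro _ ⟨i, rfl⟩
        exact hU i
      · rw [finrank_span_eq_card hs, Fintype.card_fin]
    · rintro ⟨hs, hspan⟩
      exact ⟨fun i => hspan ▸ subset_span ⟨i, rfl⟩, hs⟩

lemma natCard_finrank_eq_mul_prod {k : ℕ} (hk : k ≤ finrank F V) :
    Nat.card {U : Submodule F V // finrank F U = k} *
        ∏ i : Fin k, (Fintype.card F ^ k - Fintype.card F ^ (i : ℕ)) =
      ∏ i : Fin k, (Fintype.card F ^ finrank F V - Fintype.card F ^ (i : ℕ)) := by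
  classical
  rw [← card_linearIndependent hk, Nat.card_eq_fintype_card, Fintype.card_subtype,
    Nat.card_eq_fintype_card, Fintype.card_subtype,
    card_eq_sum_card_fiberwise (f := fun s => span F (Set.range s))
      (t := {U : Submodule F V | finrank F U = k}) fun s hs => by
        simp only [coe_filter, mem_univ, true_and, Set.mem_ofPred_eq] at hs ⊢
        rw [finrank_span_eq_card hs, Fintype.card_fin],
    sum_congr rfl fun U hU => ?_, sum_const, smul_eq_mul]
  rw [filter_filter, ← Fintype.card_subtype, ← Nat.card_eq_fintype_card,
    natCard_linearIndependent_span_eq (mem_filter.1 hU).2]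

lemma natCard_finrank_eq_gaussBinom {k : ℕ} (hk : k ≤ finrank F V) :
    Nat.card {U : Submodule F V // finrank F U = k} =
      gaussBinom (finrank F V) k (Fintype.card F) := by
  have hq : 1 < Fintype.card F := Fintype.one_lt_card
  have hcount := congrArg (Nat.cast : ℕ → ℤ) (natCard_finrank_eq_mul_prod hk)
  rw [Nat.cast_mul, cast_prod_pow_sub_pow hq.le le_rfl, cast_prod_pow_sub_pow hq.le hk,
    ← gaussBinom_mul_prod _ (finrank F V)] at hcount
  have hne : ∏ i : Fin k, ((Fintype.card F : ℤ) ^ k - Fintype.card F ^ (i : ℕ)) ≠ 0 :=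
    prod_ne_zero_iff.2 fun i _ => sub_ne_zero.2
      (pow_lt_pow_right₀ (by exact_mod_cast hq) i.2).ne'
  exact_mod_cast mul_right_cancel₀ hne hcount

lemma natCard_le_finrank_eq_gaussBinom {k : ℕ} (X : Submodule F V) (hk : k ≤ finrank F X) :
    Nat.card {U : Submodule F V // U ≤ X ∧ finrank F U = k} =
      gaussBinom (finrank F X) k (Fintype.card F) := by
  classical
  rw [← natCard_finrank_eq_gaussBinom hk]
  refine Nat.card_congr ((Equiv.subtypeEquiv (MapSubtype.orderIso X).toEquiv fun U' => ?_).trans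
    (Equiv.subtypeSubtypeEquivSubtypeInter _ _)).symm
  change _ ↔ finrank F (map X.subtype U') = k
  rw [finrank_map_subtype_eq]

end SubspaceCount

section NonPappusCount

lemma natCard_finrank_three_mem_NPset :
    Nat.card {U : Submodule F (Fin 9 → F) // finrank F U = 3 ∧ U ∈ NPset} = 8 :=
  (congrArg Set.ncard
    (Set.ext fun _ => ⟨And.right, fun hU => ⟨finrank_of_mem_NPset hU, hU⟩⟩)).trans
      ncard_NPset

variable [Fintype F]

lemma natCard_finrank_two_not_le_NPset :
    Nat.card {U : Submodule F (Fin 9 → F) // finrank F U = 2 ∧ ∀ X ∈ NPset, ¬ U ≤ X} =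
      gaussBinom 9 2 (Fintype.card F) - 8 * gaussBinom 3 1 (Fintype.card F) := by
  have hall : Nat.card {U : Submodule F (Fin 9 → F) // finrank F U = 2} =
      gaussBinom 9 2 (Fintype.card F) := by
    rw [natCard_finrank_eq_gaussBinom (by rw [finrank_fin_fun]; norm_num), finrank_fin_fun]
  have hbad :
      Nat.card {U : Submodule F (Fin 9 → F) // (∃ X ∈ NPset, U ≤ X) ∧ finrank F U = 2} =
        8 * gaussBinom 3 1 (Fintype.card F) := by
    rw [natCard_le_finrank_exists_le (c := gaussBinom 3 1 (Fintype.card F))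
      (fun X hX Y hY hXY => ?_) fun X hX => ?_, ncard_NPset]
    · have := finrank_inf_le_one_of_mem_NPset hX hY hXY
      omega
    · have h3 := finrank_of_mem_NPset hX
      rw [natCard_le_finrank_eq_gaussBinom X (by omega), h3, gaussBinom_three_two]
  have hgood : {U : Submodule F (Fin 9 → F) | finrank F U = 2 ∧ ∀ X ∈ NPset, ¬ U ≤ X} =
      {U : Submodule F (Fin 9 → F) | finrank F U = 2} \
        {U | (∃ X ∈ NPset, U ≤ X) ∧ finrank F U = 2} := by
    ext U
    simp only [Set.mem_ofPred_eq, Set.mem_sdiff, not_and]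
    exact ⟨fun ⟨hU, hgood⟩ => ⟨hU, fun ⟨X, hX, hUX⟩ _ => hgood X hX hUX⟩,
      fun ⟨hU, hbad⟩ => ⟨hU, fun X hX hUX => hbad ⟨X, hX, hUX⟩ hU⟩⟩
  rw [← hall, ← hbad]
  exact (congrArg Set.ncard hgood).trans (Set.ncard_sdiff fun U hU => hU.2)

end NonPappusCount

def RepresentsNP {m : ℕ} (C : Submodule F (Matrix (Fin 9) (Fin m) F)) : Prop :=
  ∀ U : Submodule F (Fin 9 → F), rhoCode C U = rhoNP U

namespace RepresentsNP

variable {m : ℕ} {C : Submodule F (Matrix (Fin 9) (Fin m) F)} (hC : RepresentsNP C)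
  {U X : Submodule F (Fin 9 → F)} {M : Matrix (Fin 9) (Fin m) F}
include hC

lemma m_ne_zero : m ≠ 0 :=
  ne_zero_of_rhoCode_ne_zero (U := ⊤) (by rw [hC, rhoNP_top]; norm_num)

lemma finrank_codeCU_perp_eq : (finrank F (codeCU C (perp U)) : ℚ) = m * (3 - rhoNP U) := by
  have hm : (m : ℚ) ≠ 0 := Nat.cast_ne_zero.2 hC.m_ne_zero
  have htop := hC ⊤
  rw [rhoCode_top, rhoNP_top, div_eq_iff hm] at htop
  rw [finrank_codeCU_perp hC.m_ne_zero, hC, htop]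
  ring

lemma codeCU_perp_eq_bot (hU : 3 ≤ finrank F U) (hS : U ∉ NPset) : codeCU C (perp U) = ⊥ := by
  have h := hC.finrank_codeCU_perp_eq (U := U)
  rw [rhoNP_of_three_le hU hS, sub_self, mul_zero, Nat.cast_eq_zero] at h
  exact Submodule.finrank_eq_zero.1 h

lemma finrank_codeCU_perp_of_rhoNP_eq_two (hU : rhoNP U = 2) :
    finrank F (codeCU C (perp U)) = m := by
  have h := hC.finrank_codeCU_perp_eq (U := U)
  rw [hU] at h
  exact_mod_cast h.trans (by norm_num : (m : ℚ) * (3 - 2) = m)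

lemma perp_colSpace_mem_NPset (hM : M ∈ C) (h0 : M ≠ 0) (h6 : M.rank ≤ 6) :
    perp (colSpace M) ∈ NPset := by
  by_contra hS
  have h3 : 3 ≤ finrank F (perp (colSpace M)) := by
    rw [finrank_perp, ← rank_eq_finrank_colSpace]
    omega
  have hmem := mem_codeCU_perp_perp_colSpace hM
  rw [hC.codeCU_perp_eq_bot h3 hS] at hmem
  exact h0 ((Submodule.mem_bot F).1 hmem)

lemma six_le_rank (hM : M ∈ C) (h0 : M ≠ 0) : 6 ≤ M.rank := by
  by_contra! h
  have h3 := finrank_of_mem_NPset (hC.perp_colSpace_mem_NPset hM h0 h.le)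
  rw [finrank_perp, ← rank_eq_finrank_colSpace] at h3
  omega

lemma codeCU_perp_eq_of_le (hU : finrank F U = 2) (hX : X ∈ NPset) (hUX : U ≤ X) :
    codeCU C (perp U) = codeCU C (perp X) :=
  (Submodule.eq_of_le_of_finrank_eq (codeCU_mono (perp_le_perp hUX))
    (by rw [hC.finrank_codeCU_perp_of_rhoNP_eq_two (rhoNP_of_mem hX),
      hC.finrank_codeCU_perp_of_rhoNP_eq_two (rhoNP_of_finrank_eq_two hU)])).symm

lemma seven_le_rank (hgood : ∀ X ∈ NPset, ¬ U ≤ X)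
    (hM : M ∈ codeCU C (perp U)) (h0 : M ≠ 0) : 7 ≤ M.rank := by
  have h6 := hC.six_le_rank hM.1 h0
  by_contra! h7
  refine hgood _ (hC.perp_colSpace_mem_NPset hM.1 h0 (by omega)) ?_
  exact le_perp_comm ((perp_perp U).symm ▸ hM.2)

variable [Fintype F]

open scoped Classical in
lemma natCard_colSpace_eq_perp_of_finrank_eq_three (hU : finrank F U = 3) :
    Nat.card {M // M ∈ C ∧ colSpace M = perp U} =
      if U ∈ NPset then Fintype.card F ^ m - 1 else 0 := by
  have h6 : finrank F (perp U) = 6 := by rw [finrank_perp, hU]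
  split_ifs with hS
  · rw [natCard_colSpace_eq_of_finrank_le_rank (by omega)
      fun M hM h0 => h6 ▸ hC.six_le_rank hM.1 h0,
      hC.finrank_codeCU_perp_of_rhoNP_eq_two (rhoNP_of_mem hS)]
  · refine natCard_colSpace_eq_of_rank_lt fun M hM => ?_
    rw [hC.codeCU_perp_eq_bot hU.ge hS, Submodule.mem_bot] at hM
    rw [hM, Matrix.rank_zero, h6]
    norm_num

open scoped Classical in
lemma natCard_colSpace_eq_perp_of_finrank_eq_two (hU : finrank F U = 2) :
    Nat.card {M // M ∈ C ∧ colSpace M = perp U} =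
      if ∀ X ∈ NPset, ¬ U ≤ X then Fintype.card F ^ m - 1 else 0 := by
  have h7 : finrank F (perp U) = 7 := by rw [finrank_perp, hU]
  split_ifs with hgood
  · rw [natCard_colSpace_eq_of_finrank_le_rank (by omega)
      fun M hM h0 => h7 ▸ hC.seven_le_rank hgood hM h0,
      hC.finrank_codeCU_perp_of_rhoNP_eq_two (rhoNP_of_finrank_eq_two hU)]
  · push Not at hgood
    obtain ⟨X, hX, hUX⟩ := hgood
    refine natCard_colSpace_eq_of_rank_lt fun M hM => ?_
    rw [hC.codeCU_perp_eq_of_le hU hX hUX] at hM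
    have := rank_le_finrank_of_mem_codeCU hM
    rw [finrank_perp, finrank_of_mem_NPset hX] at this
    omega

end RepresentsNP

theorem nonPappus_rank_distribution_general [Fintype F] {m : ℕ}
    (C : Submodule F (Matrix (Fin 9) (Fin m) F))
    (hrep : ∀ U : Submodule F (Fin 9 → F), rhoCode C U = rhoNP U) :
    Nat.card {M : Matrix (Fin 9) (Fin m) F // M ∈ C ∧ M.rank = 6}
        = 8 * (Fintype.card F ^ m - 1) ∧
    Nat.card {M : Matrix (Fin 9) (Fin m) F // M ∈ C ∧ M.rank = 7}
        = (Fintype.card F ^ m - 1) *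
            (gaussBinom 9 2 (Fintype.card F) - 8 * gaussBinom 3 1 (Fintype.card F)) := by
  classical
  have hC : RepresentsNP C := hrep
  constructor
  · rw [natCard_rank_eq_card_mul (by norm_num) _
      fun U hU => hC.natCard_colSpace_eq_perp_of_finrank_eq_three hU,
      natCard_finrank_three_mem_NPset]
  · rw [natCard_rank_eq_card_mul (by norm_num) _
      fun U hU => hC.natCard_colSpace_eq_perp_of_finrank_eq_two hU,
      natCard_finrank_two_not_le_NPset, mul_comm]

/-- rank distribution in ranks 6 and 7 of a putative representation of the
non-Pappus q-matroid with `m ≥ 9`. -/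
theorem nonPappus_rank_distribution [Fintype F] {m : ℕ} (hm : 9 ≤ m)
    (C : Submodule F (Matrix (Fin 9) (Fin m) F))
    (hrep : ∀ U : Submodule F (Fin 9 → F), rhoCode C U = rhoNP U) :
    Nat.card {M : Matrix (Fin 9) (Fin m) F // M ∈ C ∧ M.rank = 6}
        = 8 * (Fintype.card F ^ m - 1) ∧
    Nat.card {M : Matrix (Fin 9) (Fin m) F // M ∈ C ∧ M.rank = 7}
        = (Fintype.card F ^ m - 1) *
            (gaussBinom 9 2 (Fintype.card F) - 8 * gaussBinom 3 1 (Fintype.card F)) :=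
  nonPappus_rank_distribution_general C hrep
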